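/- arXiv:2003.06269 — 2 statements merged into one kernel-verified Lean document; each statement's English description precedes it below -/
import Mathlib

section
/- Let P_N denote the number of fixed-point-free permutations of {1,...,N} having at least one 2-cycle. Then P_0 = P_1 = 0, and for all N ≥ 2, P_N = Σ_{k=2}^{N-3} P_k * (N-1)!/k! + D_{N-2} * (N-1), where D_m is the number of derangements of m elements. -/
/-!
Fix a point `a` and classify a derangement `σ` of an `N`-element set by the cycle through `a`,
read off as the list `a, σ a, …, σᵐ a`. Such lists correspond to injective sequences of `m`
points different from `a`, so there are `(N-1)(N-2)⋯(N-m)` of them, and `σ` is that cycle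
times a derangement of the remaining `N-1-m` points. When `m = 1` the cycle is itself a
transposition and the rest is an arbitrary derangement; otherwise the rest must contain a
transposition. Finally substitute `k = N-1-m`; the terms with `k ≤ 1` vanish.
-/

/-- Number of derangements of an `N`-element set. -/
noncomputable def numDerangementsOf (N : ℕ) : ℕ :=
  Nat.card {σ : Equiv.Perm (Fin N) // ∀ i, σ i ≠ i}

/-- Number of fixed-point-free permutations of an `N`-element set having at least
one 2-cycle. -/
noncomputable def numPairedDerangements (N : ℕ) : ℕ :=
  Nat.card {σ : Equiv.Perm (Fin N) // (∀ i, σ i ≠ i) ∧ 2 ∈ σ.cycleType}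

open Equiv Equiv.Perm Finset
open scoped Nat

section Transport

variable {α β : Type*} [Fintype α] [DecidableEq α] [Fintype β] [DecidableEq β]

theorem Equiv.Perm.cycleType_permCongr (e : α ≃ β) (σ : Perm α) :
    (e.permCongr σ).cycleType = σ.cycleType := by
  have : e.permCongr σ = σ.extendDomain (e.trans (subtypeUnivEquiv fun _ => trivial).symm) := by
    ext x
    simp [extendDomain_apply_subtype _ _ (p := fun _ : β => True) trivial]
  rw [this, cycleType_extendDomain]

theorem numDerangementsOf_eq_numDerangements (N : ℕ) :
    numDerangementsOf N = numDerangements N := by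
  change Nat.card (derangements (Fin N)) = _
  rw [Nat.card_eq_fintype_card, card_derangements_eq_numDerangements, Fintype.card_fin]

variable (α) in
theorem natCard_pairedDerangements :
    Nat.card {σ : Perm α // σ ∈ derangements α ∧ 2 ∈ σ.cycleType} =
      numPairedDerangements (Fintype.card α) :=
  Nat.card_congr <| (Fintype.equivFin α).permCongr.subtypeEquiv fun σ =>
    and_congr ((Fintype.equivFin α).forall_congr (by simp)) (by rw [cycleType_permCongr])

end Transport

section CycleSplit

variable {α : Type*} [DecidableEq α]

theorem disjoint_formPerm_ofSubtype (l : List α) (τ : Perm {x // x ∉ l}) :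
    Disjoint l.formPerm (ofSubtype τ) := fun x => by
  by_cases hx : x ∈ l
  · exact Or.inr (ofSubtype_apply_of_not_mem τ (not_not_intro hx))
  · exact Or.inl (List.formPerm_apply_of_notMem hx)

theorem formPerm_mul_ofSubtype_mem_derangements_iff {l : List α} (hl : l.Nodup)
    (hL : 2 ≤ l.length) (τ : Perm {x // x ∉ l}) :
    l.formPerm * ofSubtype τ ∈ derangements α ↔ τ ∈ derangements _ := by
  refine ⟨fun h x hx => h x ?_, fun h x => ?_⟩
  · rw [mul_apply, ofSubtype_apply_coe, hx, List.formPerm_apply_of_notMem x.2]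
  by_cases hx : x ∈ l
  · rw [mul_apply, ofSubtype_apply_of_not_mem τ (not_not_intro hx)]
    exact (List.formPerm_apply_mem_ne_self_iff l hl x hx).2 hL
  · rw [mul_apply, ofSubtype_apply_of_mem τ hx, List.formPerm_apply_of_notMem (τ _).2]
    exact fun hτ => h ⟨x, hx⟩ (Subtype.ext hτ)

variable [Fintype α]

theorem cycleType_formPerm_mul_ofSubtype {l : List α} (hl : l.Nodup) (hL : 2 ≤ l.length)
    (τ : Perm {x // x ∉ l}) :
    (l.formPerm * ofSubtype τ).cycleType = l.length ::ₘ τ.cycleType := by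
  rw [(disjoint_formPerm_ofSubtype l τ).cycleType_mul, (List.isCycle_formPerm hl hL).cycleType,
    List.support_formPerm_of_nodup l hl (by rintro x rfl; simp at hL),
    List.toFinset_card_of_nodup hl, cycleType_ofSubtype]
  rfl

theorem Equiv.Perm.apply_mem_toList_iff (σ : Perm α) (a x : α) :
    σ x ∈ σ.toList a ↔ x ∈ σ.toList a := by
  simp [mem_toList_iff]

theorem Equiv.Perm.toList_eq_of_cycleOf_eq {σ τ : Perm α} {a : α}
    (h : σ.cycleOf a = τ.cycleOf a) : σ.toList a = τ.toList a := by
  have hpow (k : ℕ) : (σ ^ k) a = (τ ^ k) a := by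
    rw [← cycleOf_pow_apply_self σ, ← cycleOf_pow_apply_self τ, h]
  rw [toList, toList, h]
  exact List.ext_getElem (by simp) fun k _ _ => by
    simp [List.getElem_iterate, iterate_eq_pow, hpow]

theorem formPerm_mul_ofSubtype_subtypePerm {σ : Perm α} {a : α} {l : List α}
    (h : σ.toList a = l) (hσ : ∀ x, σ x ∉ l ↔ x ∉ l) :
    l.formPerm * ofSubtype (σ.subtypePerm (p := fun x => x ∉ l) hσ) = σ := by
  subst h
  ext x
  by_cases hx : x ∈ σ.toList a
  · rw [mul_apply, ofSubtype_subtypePerm_of_not_mem (p := fun y => y ∉ σ.toList a) hσ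
      (not_not_intro hx), formPerm_toList]
    exact (mem_toList_iff.1 hx).1.cycleOf_apply
  · rw [mul_apply, ofSubtype_subtypePerm_of_mem (p := fun y => y ∉ σ.toList a) hσ hx,
      List.formPerm_apply_of_notMem (by simpa [apply_mem_toList_iff])]

theorem toList_formPerm_mul_ofSubtype {a : α} {t : List α} (hat : (a :: t).Nodup) (ht : t ≠ [])
    (τ : Perm {x // x ∉ a :: t}) :
    ((a :: t).formPerm * ofSubtype τ).toList a = a :: t := by
  have hL : 2 ≤ (a :: t).length := by cases t <;> simp_all
  have hcycle : ((a :: t).formPerm * ofSubtype τ).cycleOf a = ((a :: t).formPerm).cycleOf a := by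
    rw [(disjoint_formPerm_ofSubtype _ τ).cycleOf_mul_distrib,
      (cycleOf_eq_one_iff _).2 (ofSubtype_apply_of_not_mem τ (by simp)), mul_one]
  rw [toList_eq_of_cycleOf_eq hcycle]
  exact toList_formPerm_nontrivial (a :: t) hL hat

end CycleSplit

theorem Fintype.card_subtype_notMem_list {α : Type*} [Fintype α] [DecidableEq α] {l : List α}
    (hl : l.Nodup) : Fintype.card {x // x ∉ l} = Fintype.card α - l.length := by
  rw [Fintype.card_subtype_compl, ← List.toFinset_card_of_nodup hl, ← Fintype.card_coe]
  simp

section CycleThrough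

variable {α : Type*} [Fintype α] [DecidableEq α] {a : α} {t : List α}

def cycleSplitEquiv (hat : (a :: t).Nodup) (ht : t ≠ []) :
    {σ : Perm α // σ.toList a = a :: t} ≃ Perm {x // x ∉ a :: t} where
  toFun σ := σ.1.subtypePerm (p := fun x => x ∉ a :: t) fun x => by
    simpa only [σ.2] using (apply_mem_toList_iff σ.1 a x).not
  invFun τ := ⟨(a :: t).formPerm * ofSubtype τ, toList_formPerm_mul_ofSubtype hat ht τ⟩
  left_inv σ := Subtype.ext (formPerm_mul_ofSubtype_subtypePerm σ.2 _)
  right_inv τ := by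
    ext x
    simp [List.formPerm_apply_of_notMem (τ x).2]

theorem natCard_toList_eq_cons (hat : (a :: t).Nodup) (ht : t ≠ []) (p : Perm α → Prop) :
    Nat.card {σ : Perm α // σ.toList a = a :: t ∧ p σ} =
      Nat.card {τ : Perm {x // x ∉ a :: t} // p ((a :: t).formPerm * ofSubtype τ)} :=
  Nat.card_congr <| (subtypeSubtypeEquivSubtypeInter _ p).symm.trans
    ((cycleSplitEquiv hat ht).symm.subtypeEquiv fun _ => Iff.rfl).symm

theorem natCard_pairedDerangements_toList_eq_cons (hat : (a :: t).Nodup) (ht : t ≠ []) :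
    Nat.card {σ : Perm α // σ.toList a = a :: t ∧ σ ∈ derangements α ∧ 2 ∈ σ.cycleType} =
      if t.length = 1 then numDerangements (Fintype.card α - 2)
      else numPairedDerangements (Fintype.card α - 1 - t.length) := by
  have hL : 2 ≤ (a :: t).length := by cases t <;> simp_all
  have hcard : Fintype.card {x // x ∉ a :: t} = Fintype.card α - 1 - t.length := by
    rw [Fintype.card_subtype_notMem_list hat, List.length_cons]; omega
  rw [natCard_toList_eq_cons hat ht]
  simp_rw [formPerm_mul_ofSubtype_mem_derangements_iff hat hL,
    cycleType_formPerm_mul_ofSubtype hat hL, Multiset.mem_cons, List.length_cons]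
  split_ifs with h1
  · simp only [h1, true_or, and_true]
    change Nat.card (derangements _) = _
    rw [Nat.card_eq_fintype_card, card_derangements_eq_numDerangements, hcard, h1, Nat.sub_sub]
  · simp only [show 2 ≠ t.length + 1 by omega, false_or]
    rw [natCard_pairedDerangements, hcard]

end CycleThrough

section CycleCount

variable {α : Type*}

def consOfFnEmbedding (a : α) (m : ℕ) : (Fin m ↪ {x // x ≠ a}) ↪ List α where
  toFun g := a :: List.ofFn fun i => (g i : α)
  inj' g h hgh := by
    ext i
    simpa using congrFun (List.ofFn_injective (List.cons_injective hgh)) i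

@[simp]
theorem consOfFnEmbedding_apply {a : α} {m : ℕ} (g : Fin m ↪ {x // x ≠ a}) :
    consOfFnEmbedding a m g = a :: List.ofFn fun i => (g i : α) :=
  rfl

theorem nodup_consOfFnEmbedding {a : α} {m : ℕ} (g : Fin m ↪ {x // x ≠ a}) :
    (consOfFnEmbedding a m g).Nodup :=
  List.nodup_cons.2 ⟨by simpa [consOfFnEmbedding] using fun i => (g i).2,
    List.nodup_ofFn.2 (Subtype.val_injective.comp g.injective)⟩

variable [Fintype α] [DecidableEq α] (a : α)

theorem cons_mem_map_consOfFnEmbedding {t : List α} (hat : (a :: t).Nodup) :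
    a :: t ∈ univ.map (consOfFnEmbedding a t.length) := by
  obtain ⟨hat, ht⟩ := List.nodup_cons.1 hat
  refine mem_map.2 ⟨⟨fun i => ⟨t[i], fun h => hat (h ▸ List.getElem_mem _)⟩, fun i j h => ?_⟩,
    mem_univ _, congrArg (a :: ·) List.ofFn_getElem⟩
  exact Fin.ext ((ht.getElem_inj_iff).1 (congrArg Subtype.val h))

theorem exists_toList_eq_cons {σ : Perm α} (ha : σ a ≠ a) : ∃ t, σ.toList a = a :: t := by
  obtain ⟨b, t, ht⟩ :=
    List.exists_cons_of_ne_nil (mt toList_eq_nil_iff.1 (not_not.2 (mem_support.2 ha)))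
  have hb : b = a := by simpa [ht] using toList_getElem_zero σ a (mem_support.2 ha)
  exact ⟨t, hb ▸ ht⟩

theorem card_pairedDerangements_toList_length_eq {m : ℕ} (hm : 1 ≤ m) :
    #{σ ∈ ({σ | σ ∈ derangements α ∧ 2 ∈ σ.cycleType} : Finset (Perm α)) |
        (σ.toList a).length - 1 = m} =
      (Fintype.card α - 1).descFactorial m *
        if m = 1 then numDerangements (Fintype.card α - 2)
        else numPairedDerangements (Fintype.card α - 1 - m) := by
  set c := if m = 1 then numDerangements (Fintype.card α - 2)
    else numPairedDerangements (Fintype.card α - 1 - m)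
  rw [card_eq_sum_card_fiberwise (f := fun σ : Perm α => σ.toList a)
    (t := univ.map (consOfFnEmbedding a m)) ?maps, sum_const_nat (m := c) fun l hl => ?fiber]
  · rw [card_map, card_univ, Fintype.card_embedding_eq, Fintype.card_fin,
      Fintype.card_subtype_compl, Fintype.card_subtype_eq]
  case fiber =>
    obtain ⟨g, -, rfl⟩ := mem_map.1 hl
    have hat := nodup_consOfFnEmbedding g
    rw [consOfFnEmbedding_apply] at hat ⊢
    set t := List.ofFn fun i => (g i : α)
    have htlen : t.length = m := List.length_ofFn
    have ht : t ≠ [] := List.ne_nil_of_length_pos (by omega)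
    calc _ = Nat.card
          {σ : Perm α // σ.toList a = a :: t ∧ σ ∈ derangements α ∧ 2 ∈ σ.cycleType} := by
          rw [Nat.card_eq_fintype_card, Fintype.card_subtype, filter_filter, filter_filter]
          refine congrArg card (filter_congr fun σ _ => ?_)
          constructor
          · rintro ⟨hσ, -, hl⟩; exact ⟨hl, hσ⟩
          · rintro ⟨hl, hσ⟩; exact ⟨hσ, by simp [hl, htlen], hl⟩
      _ = c := by rw [natCard_pairedDerangements_toList_eq_cons hat ht, htlen]
  case maps =>
    intro σ hσ
    simp only [coe_filter, mem_filter, mem_univ, true_and, Set.mem_ofPred] at hσ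
    obtain ⟨⟨hder, -⟩, hlen⟩ := hσ
    obtain ⟨t, ht⟩ := exists_toList_eq_cons a (hder a)
    rw [ht, List.length_cons, add_tsub_cancel_right] at hlen
    show σ.toList a ∈ _
    rw [ht, ← hlen]
    exact cons_mem_map_consOfFnEmbedding a (ht ▸ nodup_toList σ a)

end CycleCount

theorem numPairedDerangements_card_eq_sum {α : Type*} [Fintype α] [DecidableEq α] [Nonempty α] :
    numPairedDerangements (Fintype.card α) =
      ∑ m ∈ Icc 1 (Fintype.card α - 1), (Fintype.card α - 1).descFactorial m *
        if m = 1 then numDerangements (Fintype.card α - 2)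
        else numPairedDerangements (Fintype.card α - 1 - m) := by
  obtain ⟨a⟩ := ‹Nonempty α›
  rw [← natCard_pairedDerangements, Nat.card_eq_fintype_card, Fintype.card_subtype,
    card_eq_sum_card_fiberwise (f := fun σ : Perm α => (σ.toList a).length - 1)
      (t := Icc 1 (Fintype.card α - 1)) ?maps]
  · exact sum_congr rfl fun m hm => card_pairedDerangements_toList_length_eq a (mem_Icc.1 hm).1
  case maps =>
    intro σ hσ
    simp only [coe_filter, mem_univ, true_and, Set.mem_ofPred] at hσ
    have h2 : 2 ≤ (σ.toList a).length :=
      two_le_length_toList_iff_mem_support.2 (mem_support.2 (hσ.1 a))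
    have hN : (σ.toList a).length ≤ Fintype.card α := by
      rw [Equiv.Perm.length_toList]; exact card_le_univ _
    simp only [coe_Icc, Set.mem_Icc]
    omega


theorem numPairedDerangements_eq_zero_of_le_one {N : ℕ} (hN : N ≤ 1) :
    numPairedDerangements N = 0 := by
  rw [numPairedDerangements, Nat.card_eq_zero]
  refine Or.inl ⟨fun σ => ?_⟩
  have := (le_card_support_of_mem_cycleType σ.2.2).trans (card_le_univ σ.1.support)
  rw [Fintype.card_fin] at this
  omega

theorem sum_Icc_descFactorial_mul_eq {n : ℕ} (f : ℕ → ℕ) (hf : ∀ k ≤ 1, f k = 0) :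
    ∑ m ∈ Icc 2 n, n.descFactorial m * f (n - m) = ∑ k ∈ Icc 2 (n - 2), f k * (n ! / k !) := by
  calc ∑ m ∈ Icc 2 n, n.descFactorial m * f (n - m)
      = ∑ m ∈ Icc 2 (n - 2), n.descFactorial m * f (n - m) := by
        refine (sum_subset (Icc_subset_Icc_right (by omega)) fun m hm hm' => ?_).symm
        simp only [mem_Icc] at hm hm'
        rw [hf _ (by omega), mul_zero]
    _ = ∑ k ∈ Icc 2 (n - 2), f k * (n ! / k !) := by
        refine sum_nbij' (n - ·) (n - ·) ?_ ?_ ?_ ?_ fun m hm => ?_ <;>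
          try (intro m hm; simp only [mem_Icc] at hm ⊢; omega)
        simp only [mem_Icc] at hm
        rw [Nat.descFactorial_eq_div (by omega), mul_comm]

theorem pairedDerangements_recursion :
    numPairedDerangements 0 = 0 ∧ numPairedDerangements 1 = 0 ∧
    ∀ N, 2 ≤ N →
      numPairedDerangements N =
        (∑ k ∈ Finset.Icc 2 (N - 3),
            numPairedDerangements k * (Nat.factorial (N - 1) / Nat.factorial k)) +
          numDerangementsOf (N - 2) * (N - 1) := by
  refine ⟨numPairedDerangements_eq_zero_of_le_one zero_le_one,
    numPairedDerangements_eq_zero_of_le_one le_rfl, fun N hN => ?_⟩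
  have : Nonempty (Fin N) := ⟨⟨0, by omega⟩⟩
  have h := numPairedDerangements_card_eq_sum (α := Fin N)
  rw [Fintype.card_fin] at h
  rw [h, numDerangementsOf_eq_numDerangements, ← insert_Icc_add_one_left_eq_Icc (by omega),
    sum_insert (by simp), if_pos rfl, Nat.descFactorial_one, add_comm, mul_comm]
  congr 1
  rw [show N - 3 = N - 1 - 2 by omega,
    ← sum_Icc_descFactorial_mul_eq _ fun _ => numPairedDerangements_eq_zero_of_le_one]
  exact sum_congr rfl fun m hm => by rw [if_neg (by simp at hm; omega)]
end

section
/- The number of permutations of {1,...,N} with all cycle lengths at least 3 equals N! * Σ_{k=0}^N (-1)^k * Σ_{j=0}^{⌊k/2⌋} (-1)^j / ((k-2j)! * j! * 2^j). -/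
/-!
Inclusion–exclusion over fixed points and 2-cycles. Let `σ` have `F` fixed points and `T`
2-cycles. The embeddings `f` of `Fin i ⊕ Fin j × Bool` into `α` with `σ ∘ f = f ∘ ι`, where the
model involution `ι` fixes `Fin i` and swaps `(c, false) ↔ (c, true)`, number
`F^(i) · T^(j) · 2^j` (falling factorials), so weighting them by `(-1)^(i+j) / (i! j! 2^j)` and
summing over `i, j` gives `(1 - 1)^F (1 - 1)^T`, the indicator that `σ` has neither.
Counted the other way round, each such `f` is compatible with exactly `(n - i - 2j)!`
permutations, so the weighted total over all `σ` is `∑_{i + 2j ≤ n} (-1)^(i+j) n! / (i! j! 2^j)`;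
grouping the terms by `k = i + 2j` gives the formula.
-/

/-- `numLongCyclePerms N` is the number of permutations of an `N`-element set all of
whose cycles have length at least 3 (no fixed points and no 2-cycles). -/
noncomputable def numLongCyclePerms (N : ℕ) : ℕ :=
  Nat.card {σ : Equiv.Perm (Fin N) // (∀ i, σ i ≠ i) ∧ 2 ∉ σ.cycleType}

open Finset Function Equiv Equiv.Perm Nat

section Semiconj

variable {S α : Type*}

theorem Function.Semiconj.mem_range_iff {π : Perm S} {σ : Perm α} {f : S → α}
    (h : Semiconj f π σ) (x : α) : σ x ∈ Set.range f ↔ x ∈ Set.range f := by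
  constructor
  · rintro ⟨a, ha⟩
    refine ⟨π.symm a, σ.injective ?_⟩
    rw [← h, apply_symm_apply, ha]
  · rintro ⟨a, rfl⟩
    exact ⟨π a, h a⟩

open Classical in
noncomputable def semiconjPermEquiv (π : Perm S) (f : S ↪ α) :
    {σ : Perm α // Semiconj f π σ} ≃ Perm {x // x ∉ Set.range f} where
  toFun σ := σ.1.subtypePerm fun x => not_congr (σ.2.mem_range_iff x)
  invFun τ := ⟨((ofInjective f f.injective).permCongr π).subtypeCongr τ, fun a => by
    rw [Perm.subtypeCongr.left_apply _ _ (Set.mem_range_self a)]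
    simp [permCongr_apply]⟩
  left_inv σ := by
    ext x
    by_cases hx : x ∈ Set.range f
    · obtain ⟨a, rfl⟩ := hx
      simp [Perm.subtypeCongr.left_apply _ _ (Set.mem_range_self a), permCongr_apply, σ.2 a]
    · simp [Perm.subtypeCongr.right_apply _ _ hx]
  right_inv τ := by
    ext x
    simp [Perm.subtypeCongr.right_apply _ _ x.2]

variable [Fintype S] [Fintype α]

theorem card_semiconj_perm (π : Perm S) (f : S ↪ α) :
    Nat.card {σ : Perm α // Semiconj f π σ} = (Fintype.card α - Fintype.card S)! := by
  classical
  rw [Nat.card_congr (semiconjPermEquiv π f), Nat.card_perm, Nat.card_eq_fintype_card,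
    Fintype.card_subtype_compl, Set.card_range_of_injective f.injective]

theorem sum_natCard_subtype_comm {X Y : Type*} [Fintype X] [Fintype Y] (P : X → Y → Prop) :
    ∑ x, Nat.card {y // P x y} = ∑ y, Nat.card {x // P x y} := by
  classical
  simp only [Nat.card_eq_fintype_card, Fintype.card_subtype, card_filter]
  exact sum_comm

theorem sum_card_semiconj_embedding [DecidableEq α] (π : Perm S) :
    ∑ σ : Perm α, Nat.card {f : S ↪ α // Semiconj f π σ} =
      if Fintype.card S ≤ Fintype.card α then (Fintype.card α)! else 0 := by
  classical
  rw [sum_natCard_subtype_comm (fun (σ : Perm α) (f : S ↪ α) => Semiconj f π σ)]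
  simp only [card_semiconj_perm, sum_const, smul_eq_mul]
  rw [Finset.card_univ, Fintype.card_embedding_eq]
  split_ifs with h
  · rw [mul_comm, Nat.factorial_mul_descFactorial h]
  · rw [Nat.descFactorial_of_lt (not_le.mp h), zero_mul]

end Semiconj

section Model

variable {α β γ : Type*}

theorem Function.Semiconj.apply_ne_self {π : Perm γ} {σ : Perm α} {g : γ ↪ α}
    (h : Semiconj g π σ) (hπ : ∀ c, π c ≠ c) (c : γ) : σ (g c) ≠ g c := by
  rw [← h c]
  exact g.injective.ne (hπ c)

def semiconjSumEquiv (σ : Perm α) (π : Perm γ) (hπ : ∀ c, π c ≠ c) :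
    {f : β ⊕ γ ↪ α // Semiconj f (Perm.sumCongr 1 π) σ} ≃
      (β ↪ fixedPoints σ) × {g : γ ↪ α // Semiconj g π σ} where
  toFun f :=
    (⟨fun b => ⟨f.1 (.inl b), (f.2 (.inl b)).symm⟩, fun b b' h => Sum.inl_injective
      (f.1.injective (congrArg Subtype.val h))⟩,
     ⟨Embedding.inr.trans f.1, fun c => f.2 (.inr c)⟩)
  invFun g := ⟨sumEmbeddingEquivProdEmbeddingDisjoint.symm
      ⟨(g.1.trans (Embedding.subtype _), g.2.1), Set.disjoint_left.mpr <| by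
        rintro _ ⟨b, rfl⟩ ⟨c, hc⟩
        exact g.2.2.apply_ne_self hπ c (hc ▸ (g.1 b).2)⟩,
    by
      rintro (b | c)
      · exact ((g.1 b).2 : σ _ = _).symm
      · exact g.2.2 c⟩
  left_inv f := by ext (b | c) <;> rfl
  right_inv g := rfl

abbrev boolNotSnd (γ : Type*) : Perm (γ × Bool) := prodCongr 1 boolNot

abbrev modelInvolution (β γ : Type*) : Perm (β ⊕ γ × Bool) := Perm.sumCongr 1 (boolNotSnd γ)

theorem Function.Semiconj.apply_boolNotSnd {σ : Perm α} {g : γ × Bool → α}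
    (hg : Semiconj g (boolNotSnd γ) σ) (c : γ) (b : Bool) : σ (g (c, b)) = g (c, !b) :=
  (hg (c, b)).symm

end Model

namespace Equiv.Perm

section TwoCycles

variable {α γ : Type*} [LinearOrder α] {σ : Perm α}

-- A 2-cycle is recorded by its smaller point; the linear order serves only to make this choice.
def twoCycleMins (σ : Perm α) : Set α := {x | x < σ x ∧ σ (σ x) = x}

theorem min_apply_mem_twoCycleMins {x : α} (hx : σ x ≠ x) (h2 : σ (σ x) = x) :
    min x (σ x) ∈ σ.twoCycleMins := by
  rcases lt_or_gt_of_ne hx with h | h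
  · rw [min_eq_right h.le]; exact ⟨h2.symm ▸ h, h2.symm ▸ rfl⟩
  · rw [min_eq_left h.le]; exact ⟨h, h2⟩

theorem min_apply_eq_of_mem_twoCycleMins {r : α} (hr : r ∈ σ.twoCycleMins) :
    min r (σ r) = r ∧ min (σ r) (σ (σ r)) = r := by
  rw [hr.2]
  exact ⟨min_eq_left hr.1.le, min_eq_right hr.1.le⟩

theorem twoCycleMins_nonempty_iff : σ.twoCycleMins.Nonempty ↔ ∃ x, σ x ≠ x ∧ σ (σ x) = x :=
  ⟨fun ⟨r, hr⟩ => ⟨r, hr.1.ne', hr.2⟩, fun ⟨_, hx, h2⟩ => ⟨_, min_apply_mem_twoCycleMins hx h2⟩⟩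

variable (σ) in
def orientedTwoCycles (h : γ ↪ σ.twoCycleMins) (o : γ → Bool) (c : γ) (b : Bool) : α :=
  if b = o c then σ (h c) else h c

theorem min_orientedTwoCycles (h : γ ↪ σ.twoCycleMins) (o : γ → Bool) (c : γ) (b : Bool) :
    min (orientedTwoCycles σ h o c b) (σ (orientedTwoCycles σ h o c b)) = h c := by
  unfold orientedTwoCycles
  split_ifs
  exacts [(min_apply_eq_of_mem_twoCycleMins (h c).2).2,
    (min_apply_eq_of_mem_twoCycleMins (h c).2).1]

def twoCycleMinsOfSemiconj (g : {g : γ × Bool ↪ α // Semiconj g (boolNotSnd γ) σ}) :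
    γ ↪ σ.twoCycleMins where
  toFun c := ⟨min (g.1 (c, false)) (g.1 (c, true)), by
    have h₁ := g.2.apply_boolNotSnd c false
    have h₂ := g.2.apply_boolNotSnd c true
    simp only [Bool.not_false, Bool.not_true] at h₁ h₂
    rw [← h₁] at h₂ ⊢
    exact min_apply_mem_twoCycleMins (h₁ ▸ g.1.injective.ne (by simp)) h₂⟩
  inj' c c' heq := by
    have heq' := congrArg Subtype.val heq
    rcases min_choice (g.1 (c, false)) (g.1 (c, true)) with h₁ | h₁ <;>
    rcases min_choice (g.1 (c', false)) (g.1 (c', true)) with h₂ | h₂ <;>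
    exact congrArg Prod.fst (g.1.injective (h₁.symm.trans (heq'.trans h₂)))

@[simp]
theorem coe_twoCycleMinsOfSemiconj_apply (g : {g : γ × Bool ↪ α // Semiconj g (boolNotSnd γ) σ})
    (c : γ) : (twoCycleMinsOfSemiconj g c : α) = min (g.1 (c, false)) (g.1 (c, true)) :=
  rfl

variable (σ) in
def semiconjTwoCycleEquiv :
    {g : γ × Bool ↪ α // Semiconj g (boolNotSnd γ) σ} ≃ (γ ↪ σ.twoCycleMins) × (γ → Bool) where
  toFun g := (twoCycleMinsOfSemiconj g, fun c => decide (g.1 (c, false) < g.1 (c, true)))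
  invFun p := ⟨⟨fun cb => orientedTwoCycles σ p.1 p.2 cb.1 cb.2, by
      rintro ⟨c, b⟩ ⟨c', b'⟩ heq
      have hc : c = c' := p.1.injective <| Subtype.ext <| by
        rw [← min_orientedTwoCycles p.1 p.2 c b, ← min_orientedTwoCycles p.1 p.2 c' b']
        exact congrArg (fun x => min x (σ x)) heq
      subst hc
      have hne := (p.1 c).2.1.ne
      cases b <;> cases b' <;> cases hc : p.2 c <;> simp_all [orientedTwoCycles]⟩, by
      rintro ⟨c, b⟩
      have := (p.1 c).2.2
      cases b <;> cases hc : p.2 c <;> simp_all [orientedTwoCycles]⟩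
  left_inv g := by
    ext ⟨c, b⟩
    have h₁ := g.2.apply_boolNotSnd c false
    have h₂ := g.2.apply_boolNotSnd c true
    have hne : g.1 (c, false) ≠ g.1 (c, true) := g.1.injective.ne (by simp)
    rcases lt_or_gt_of_ne hne with h | h <;> cases b <;>
      simp_all [orientedTwoCycles, h.le, h.not_gt]
  right_inv p := by
    have hlt := fun c => (p.1 c).2.1
    ext c
    · cases hc : p.2 c <;> simp [orientedTwoCycles, hc, (hlt c).le]
    · cases hc : p.2 c <;> simp [orientedTwoCycles, hc, hlt c, (hlt c).not_gt]

end TwoCycles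

variable {α : Type*} [Fintype α] [DecidableEq α] {σ : Perm α}

theorem swap_mem_cycleFactorsFinset_iff {x y : α} (hxy : x ≠ y) :
    swap x y ∈ σ.cycleFactorsFinset ↔ σ x = y ∧ σ y = x := by
  rw [mem_cycleFactorsFinset_iff, support_swap hxy]
  simp only [isCycle_swap hxy, mem_insert, mem_singleton, or_imp, forall_and, forall_eq,
    swap_apply_left, swap_apply_right, true_and]
  exact and_congr eq_comm eq_comm

theorem two_mem_cycleType_iff : 2 ∈ σ.cycleType ↔ ∃ x, σ x ≠ x ∧ σ (σ x) = x := by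
  rw [cycleType_def, Multiset.mem_map]
  constructor
  · rintro ⟨c, hc, hcard⟩
    obtain ⟨x, y, hxy, rfl⟩ := card_support_eq_two.mp hcard
    obtain ⟨hx, hy⟩ := (swap_mem_cycleFactorsFinset_iff hxy).mp hc
    exact ⟨x, hx ▸ hxy.symm, hx ▸ hy⟩
  · rintro ⟨x, hx, h2⟩
    exact ⟨swap x (σ x), (swap_mem_cycleFactorsFinset_iff hx.symm).mpr ⟨rfl, h2⟩,
      card_support_swap hx.symm⟩

end Equiv.Perm

theorem sum_range_neg_one_pow_mul_choose_of_le {R : Type*} [Ring R] {m k : ℕ} (h : m ≤ k) :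
    ∑ i ∈ range (k + 1), (-1 : R) ^ i * m.choose i = if m = 0 then 1 else 0 := by
  have hsub : range (m + 1) ⊆ range (k + 1) := range_subset_range.mpr (by omega)
  rw [← sum_subset hsub fun i _ hi => by
    rw [choose_eq_zero_of_lt (by simpa using hi), cast_zero, mul_zero]]
  exact_mod_cast congrArg (Int.cast : ℤ → R) Int.alternating_sum_range_choose

theorem sum_range_sum_range_div_two {M : Type*} [AddCommMonoid M] (n : ℕ) (g : ℕ → ℕ → M) :
    ∑ k ∈ range (n + 1), ∑ j ∈ range (k / 2 + 1), g (k - 2 * j) j =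
      ∑ i ∈ range (n + 1), ∑ j ∈ range (n + 1), if i + 2 * j ≤ n then g i j else 0 := by
  rw [sum_sigma', ← sum_product', ← sum_filter]
  refine sum_bij' (fun x _ => (x.1 - 2 * x.2, x.2)) (fun p _ => ⟨p.1 + 2 * p.2, p.2⟩)
    ?_ ?_ ?_ ?_ ?_ <;> simp only [mem_sigma, mem_filter, mem_product, mem_range]
  · rintro ⟨k, j⟩ ⟨hk, hj⟩
    omega
  · rintro ⟨i, j⟩ ⟨-, h⟩
    omega
  · rintro ⟨k, j⟩ ⟨-, hj : j < k / 2 + 1⟩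
    simp only [Sigma.mk.injEq, heq_eq_eq, and_true]
    omega
  · rintro ⟨i, j⟩ -
    simp
  · intros
    trivial

section InclusionExclusion

variable {α : Type*} [Fintype α] [LinearOrder α]

theorem card_semiconj_modelInvolution (σ : Perm α) (β γ : Type*) [Fintype β] [Fintype γ] :
    Nat.card {f : β ⊕ γ × Bool ↪ α // Semiconj f (modelInvolution β γ) σ} =
      (Nat.card (fixedPoints σ)).descFactorial (Fintype.card β) *
        ((Nat.card σ.twoCycleMins).descFactorial (Fintype.card γ) * 2 ^ Fintype.card γ) := by
  classical
  rw [Nat.card_congr (semiconjSumEquiv σ _ (by rintro ⟨c, b⟩; simp)), Nat.card_prod,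
    Nat.card_congr (semiconjTwoCycleEquiv σ), Nat.card_prod]
  simp [Nat.card_eq_fintype_card, Fintype.card_embedding_eq]

noncomputable def Equiv.Perm.numModelEmbeddings (σ : Perm α) (i j : ℕ) : ℕ :=
  Nat.card {f : Fin i ⊕ Fin j × Bool ↪ α // Semiconj f (modelInvolution (Fin i) (Fin j)) σ}

theorem sum_neg_one_pow_mul_numModelEmbeddings (σ : Perm α) :
    ∑ i ∈ range (Fintype.card α + 1), ∑ j ∈ range (Fintype.card α + 1),
      (-1 : ℚ) ^ (i + j) / (i ! * j ! * 2 ^ j) * σ.numModelEmbeddings i j =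
      if (∀ x, σ x ≠ x) ∧ 2 ∉ σ.cycleType then 1 else 0 := by
  set F := Nat.card (fixedPoints σ)
  set T := Nat.card σ.twoCycleMins
  have hterm (i j : ℕ) : (-1 : ℚ) ^ (i + j) / (i ! * j ! * 2 ^ j) * σ.numModelEmbeddings i j =
      ((-1) ^ i * F.choose i) * ((-1) ^ j * T.choose j) := by
    rw [numModelEmbeddings, card_semiconj_modelInvolution, Fintype.card_fin,
      Fintype.card_fin, descFactorial_eq_factorial_mul_choose,
      descFactorial_eq_factorial_mul_choose]
    push_cast
    field_simp
    ring
  have hF : F ≤ Fintype.card α := Nat.card_eq_fintype_card (α := α) ▸ Finite.card_subtype_le _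
  have hT : T ≤ Fintype.card α := Nat.card_eq_fintype_card (α := α) ▸ Finite.card_subtype_le _
  have hF0 : F = 0 ↔ ∀ x, σ x ≠ x := by
    simp [F, IsFixedPt]
  have hT0 : T = 0 ↔ 2 ∉ σ.cycleType := by
    rw [two_mem_cycleType_iff, ← twoCycleMins_nonempty_iff, Finite.card_eq_zero_iff,
      Set.isEmpty_coe_sort, Set.not_nonempty_iff_eq_empty]
  simp_rw [hterm, ← sum_mul_sum, sum_range_neg_one_pow_mul_choose_of_le hF,
    sum_range_neg_one_pow_mul_choose_of_le hT, ite_zero_mul_ite_zero, one_mul, hF0, hT0]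

theorem card_longCyclePerms_eq_sum :
    (Nat.card {σ : Perm α // (∀ x, σ x ≠ x) ∧ 2 ∉ σ.cycleType} : ℚ) =
      ∑ i ∈ range (Fintype.card α + 1), ∑ j ∈ range (Fintype.card α + 1),
        if i + 2 * j ≤ Fintype.card α then
          (-1 : ℚ) ^ (i + j) / (i ! * j ! * 2 ^ j) * (Fintype.card α)! else 0 := by
  have hshape (i j : ℕ) : Fintype.card (Fin i ⊕ Fin j × Bool) = i + 2 * j := by
    simp [mul_comm]
  calc (Nat.card {σ : Perm α // (∀ x, σ x ≠ x) ∧ 2 ∉ σ.cycleType} : ℚ)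
      = ∑ σ : Perm α, if (∀ x, σ x ≠ x) ∧ 2 ∉ σ.cycleType then (1 : ℚ) else 0 := by
        rw [Nat.card_eq_fintype_card, Fintype.card_subtype, sum_boole]
    _ = ∑ i ∈ range (Fintype.card α + 1), ∑ j ∈ range (Fintype.card α + 1),
          (-1 : ℚ) ^ (i + j) / (i ! * j ! * 2 ^ j) *
            ∑ σ : Perm α, σ.numModelEmbeddings i j := by
        simp_rw [← sum_neg_one_pow_mul_numModelEmbeddings, cast_sum, mul_sum]
        rw [sum_comm]
        exact sum_congr rfl fun i _ => sum_comm
    _ = _ := by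
        simp_rw [numModelEmbeddings, sum_card_semiconj_embedding, hshape, cast_ite, cast_zero,
          mul_ite, mul_zero]

end InclusionExclusion

theorem neg_one_pow_sub_two_mul {R : Type*} [Monoid R] [HasDistribNeg R] {k j : ℕ}
    (h : 2 * j ≤ k) :
    (-1 : R) ^ (k - 2 * j) = (-1) ^ k := by
  obtain ⟨i, rfl⟩ := Nat.exists_eq_add_of_le' h
  simp [pow_add, pow_mul]

theorem longCyclePerms_formula (N : ℕ) :
    (numLongCyclePerms N : ℚ) =
      (Nat.factorial N : ℚ) *
        ∑ k ∈ Finset.range (N + 1), (-1 : ℚ) ^ k *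
          ∑ j ∈ Finset.range (k / 2 + 1),
            (-1 : ℚ) ^ j /
              ((Nat.factorial (k - 2 * j) : ℚ) * (Nat.factorial j : ℚ) * 2 ^ j) := by
  have hsummand (k j : ℕ) (hj : j ∈ range (k / 2 + 1)) :
      (N ! : ℚ) * ((-1) ^ k * ((-1) ^ j / ((k - 2 * j)! * j ! * 2 ^ j))) =
        (-1) ^ (k - 2 * j + j) / ((k - 2 * j)! * j ! * 2 ^ j) * N ! := by
    rw [pow_add, neg_one_pow_sub_two_mul (by rw [mem_range] at hj; omega)]
    ring
  rw [numLongCyclePerms, card_longCyclePerms_eq_sum, Fintype.card_fin,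
    ← sum_range_sum_range_div_two N fun i j => (-1 : ℚ) ^ (i + j) / (i ! * j ! * 2 ^ j) * N !]
  simp_rw [mul_sum]
  exact sum_congr rfl fun k _ => sum_congr rfl fun j hj => (hsummand k j hj).symm
end
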